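/- Let f : ℝⁿ → ℝⁿ be continuously differentiable with Jacobian Df(x), let λ ≥ 0, ε ≥ 0, and let P be a real symmetric n×n matrix such that Df(x)ᵀP + P·Df(x) ⪯ −2λP − εI for all x ∈ ℝⁿ. Let x, y : [0,∞) → ℝⁿ be differentiable with x′(t) = f(x(t)) and y′(t) = f(y(t)) for all t ≥ 0. Then for every t ≥ 0: e^(2λt)·V(x(t)−y(t)) ≤ V(x(0)−y(0)) − ε·∫₀ᵗ e^(2λτ)·|x(τ)−y(τ)|² dτ, where V(z) = zᵀPz. -/

import Mathlib

open Matrix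

/-- `M ⪯ N` iff `N - M` is positive semidefinite. -/
def matLE {m : Type*} [Fintype m] (M N : Matrix m m ℝ) : Prop := (N - M).PosSemidef

/-- A real symmetric matrix has inertia `p`: exactly `p` negative eigenvalues,
`card m − p` positive eigenvalues, and no zero eigenvalues, counted with multiplicity
(as roots of the characteristic polynomial). -/
def hasInertia {m : Type*} [Fintype m] [DecidableEq m]
    (P : Matrix m m ℝ) (p : ℕ) : Prop :=
  Multiset.countP (fun μ : ℝ => μ < 0) P.charpoly.roots = p ∧
  Multiset.countP (fun μ : ℝ => 0 < μ) P.charpoly.roots = Fintype.card m - p ∧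
  (0 : ℝ) ∉ P.charpoly.roots

/-- Number of complex eigenvalues (with algebraic multiplicity) of a real matrix
with strictly positive real part. -/
noncomputable def posReCount {m : Type*} [Fintype m] [DecidableEq m]
    (A : Matrix m m ℝ) : ℕ :=
  Multiset.countP (fun μ : ℂ => 0 < μ.re) (A.map Complex.ofReal).charpoly.roots

/-- Number of complex eigenvalues (with algebraic multiplicity) of a real matrix
with strictly negative real part. -/
noncomputable def negReCount {m : Type*} [Fintype m] [DecidableEq m]
    (A : Matrix m m ℝ) : ℕ :=
  Multiset.countP (fun μ : ℂ => μ.re < 0) (A.map Complex.ofReal).charpoly.roots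

/-- The quadratic form `xᵀ P x`. -/
def quadForm {m : Type*} [Fintype m] (P : Matrix m m ℝ) (x : m → ℝ) : ℝ :=
  x ⬝ᵥ P.mulVec x

/-- Euclidean norm on `m → ℝ`. -/
noncomputable def enorm {m : Type*} [Fintype m] (x : m → ℝ) : ℝ :=
  Real.sqrt (x ⬝ᵥ x)

/-- `J` is the Jacobian of `f`. -/
def IsJacobianOf {n : ℕ} (J : (Fin n → ℝ) → Matrix (Fin n) (Fin n) ℝ)
    (f : (Fin n → ℝ) → (Fin n → ℝ)) : Prop :=
  ∀ x, HasFDerivAt f (LinearMap.toContinuousLinearMap ((J x).mulVecLin)) x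


/-! With `Q = -2λP - εI`, the matrix inequality says `2 zᵀ P Df(w) z ≤ zᵀ Q z` for all `w, z`;
the mean value inequality along the segment from `b` to `a` turns this into the incremental
bound `2 (a - b)ᵀ P (f a - f b) ≤ (a - b)ᵀ Q (a - b)`. Hence `v = V(x - y)` obeys
`v' ≤ -2λ v - ε |x - y|²`, so `e^{2λs} v(s) + ε ∫₀ˢ e^{2λτ} |x - y|²` is antitone on `[0, ∞)`. -/

open Set

section Derivatives

variable {𝕜 : Type*} [NontriviallyNormedField 𝕜] {m : Type*} [Fintype m]
  {u v : 𝕜 → m → 𝕜} {u' v' : m → 𝕜} {t : 𝕜}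

theorem HasDerivAt.dotProduct (hu : HasDerivAt u u' t) (hv : HasDerivAt v v' t) :
    HasDerivAt (fun s => u s ⬝ᵥ v s) (u' ⬝ᵥ v t + u t ⬝ᵥ v') t := by
  simp only [_root_.dotProduct, ← Finset.sum_add_distrib]
  exact HasDerivAt.fun_sum fun i _ => (hasDerivAt_pi.mp hu i).fun_mul (hasDerivAt_pi.mp hv i)

theorem HasDerivAt.mulVec (A : Matrix m m 𝕜) (hu : HasDerivAt u u' t) :
    HasDerivAt (fun s => A *ᵥ u s) (A *ᵥ u') t :=
  hasDerivAt_pi.2 fun i => ((hasDerivAt_const t (A i)).dotProduct hu).congr_deriv <| by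
    rw [zero_dotProduct, zero_add]; rfl

end Derivatives

theorem Matrix.IsSymm.dotProduct_mulVec_comm {m : Type*} [Fintype m] {P : Matrix m m ℝ}
    (hP : P.IsSymm) (u v : m → ℝ) : u ⬝ᵥ P *ᵥ v = v ⬝ᵥ P *ᵥ u := by
  rw [dotProduct_mulVec, ← hP.eq, vecMul_transpose, dotProduct_comm, hP.eq]

theorem HasDerivAt.quadForm {m : Type*} [Fintype m] {P : Matrix m m ℝ} (hP : P.IsSymm)
    {u : ℝ → m → ℝ} {u' : m → ℝ} {t : ℝ} (hu : HasDerivAt u u' t) :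
    HasDerivAt (fun s => quadForm P (u s)) (2 * (u t ⬝ᵥ P *ᵥ u')) t := by
  have := hu.dotProduct (hu.mulVec P)
  rwa [hP.dotProduct_mulVec_comm u', ← two_mul] at this

theorem matLE.two_mul_dotProduct_mulVec_le {m : Type*} [Fintype m] {P A Q : Matrix m m ℝ}
    (hP : P.IsSymm) (h : matLE (Aᵀ * P + P * A) Q) (z : m → ℝ) :
    2 * (z ⬝ᵥ P *ᵥ (A *ᵥ z)) ≤ quadForm Q z := by
  have hnonneg := h.dotProduct_mulVec_nonneg z
  have htranspose : z ⬝ᵥ Aᵀ *ᵥ (P *ᵥ z) = z ⬝ᵥ P *ᵥ (A *ᵥ z) := by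
    rw [dotProduct_mulVec, vecMul_transpose, hP.dotProduct_mulVec_comm z]
  simp only [star_trivial, sub_mulVec, add_mulVec, ← mulVec_mulVec, dotProduct_sub,
    dotProduct_add, htranspose] at hnonneg
  unfold quadForm
  linarith

theorem two_mul_dotProduct_mulVec_sub_le {m : Type*} [Fintype m] {f : (m → ℝ) → m → ℝ}
    {f' : (m → ℝ) → (m → ℝ) →L[ℝ] (m → ℝ)} (hf : ∀ x, HasFDerivAt f (f' x) x)
    {P Q : Matrix m m ℝ} (hQ : ∀ x z, 2 * (z ⬝ᵥ P *ᵥ f' x z) ≤ quadForm Q z)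
    (a b : m → ℝ) :
    2 * ((a - b) ⬝ᵥ P *ᵥ (f a - f b)) ≤ quadForm Q (a - b) := by
  set z := a - b
  let φ : ℝ → ℝ := fun s => 2 * (z ⬝ᵥ P *ᵥ f (b + s • z))
  have hφ : ∀ s, HasDerivAt φ (2 * (z ⬝ᵥ P *ᵥ f' (b + s • z) z)) s := by
    intro s
    have hline : HasDerivAt (fun s : ℝ => b + s • z) z s := by
      simpa using ((hasDerivAt_id s).smul_const z).const_add b
    have hcomp := (hf (b + s • z)).comp_hasDerivAt s hline
    simpa using ((hasDerivAt_const s z).dotProduct (hcomp.mulVec P)).const_mul 2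
  have hmv := image_sub_le_mul_sub_of_deriv_le (fun s => (hφ s).differentiableAt)
    (fun s => (hφ s).deriv ▸ hQ _ z) zero_le_one
  simp only [φ, one_smul, zero_smul, add_zero, sub_zero, mul_one, z, add_sub_cancel] at hmv
  rw [mulVec_sub, dotProduct_sub]
  linarith

theorem exp_mul_le_sub_integral_of_hasDerivAt_le {v v' w : ℝ → ℝ} {c : ℝ}
    (hv : ∀ s, 0 ≤ s → HasDerivAt v (v' s) s) (hw : ContinuousOn w (Ici 0))
    (hle : ∀ s, 0 ≤ s → v' s ≤ -c * v s - w s) {t : ℝ} (ht : 0 ≤ t) :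
    Real.exp (c * t) * v t ≤ v 0 - ∫ τ in (0 : ℝ)..t, Real.exp (c * τ) * w τ := by
  have hexp : ∀ s, HasDerivAt (fun s => Real.exp (c * s)) (c * Real.exp (c * s)) s :=
    fun s => by simpa [mul_comm] using ((hasDerivAt_id s).const_mul c).exp
  have hew : ContinuousOn (fun τ => Real.exp (c * τ) * w τ) (Ici 0) :=
    (Continuous.continuousOn (by fun_prop)).mul hw
  let g : ℝ → ℝ := fun s => Real.exp (c * s) * v s + ∫ τ in (0 : ℝ)..s, Real.exp (c * τ) * w τ
  have hg : ∀ s ∈ Ioo 0 t,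
      HasDerivAt g (Real.exp (c * s) * (c * v s + v' s + w s)) s := by
    intro s hs
    have hint := intervalIntegral.integral_hasDerivAt_right
      ((hew.mono Icc_subset_Ici_self).intervalIntegrable_of_Icc hs.1.le)
      ((hew.mono Ioi_subset_Ici_self).stronglyMeasurableAtFilter isOpen_Ioi s hs.1)
      (hew.continuousAt (Ici_mem_nhds hs.1))
    exact (((hexp s).fun_mul (hv s hs.1.le)).fun_add hint).congr_deriv (by ring)
  have hcont : ContinuousOn g (Icc 0 t) := by
    refine ContinuousOn.add (fun s hs => ?_) ?_
    · exact ((hexp s).continuousAt.mul (hv s hs.1).continuousAt).continuousWithinAt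
    · simpa [uIcc_of_le ht] using intervalIntegral.continuousOn_primitive_interval'
        ((hew.mono Icc_subset_Ici_self).intervalIntegrable_of_Icc ht) left_mem_uIcc
  have hanti : AntitoneOn g (Icc 0 t) := by
    refine antitoneOn_of_deriv_nonpos (convex_Icc 0 t) hcont ?_ ?_ <;>
      rw [interior_Icc] <;> intro s hs
    · exact (hg s hs).differentiableAt.differentiableWithinAt
    · rw [(hg s hs).deriv]
      exact mul_nonpos_of_nonneg_of_nonpos (Real.exp_pos _).le (by linarith [hle s hs.1.le])
  have := hanti (left_mem_Icc.mpr ht) (right_mem_Icc.mpr ht) ht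
  simp only [g, mul_zero, Real.exp_zero, one_mul, intervalIntegral.integral_same, add_zero] at this
  linarith

theorem incremental_integral_estimate_general {n : ℕ}
    (f : (Fin n → ℝ) → (Fin n → ℝ)) (J : (Fin n → ℝ) → Matrix (Fin n) (Fin n) ℝ)
    (hJ : IsJacobianOf J f)
    (P : Matrix (Fin n) (Fin n) ℝ) (hPsymm : P.IsSymm)
    (lam eps : ℝ)
    (hLMI : ∀ x : Fin n → ℝ, matLE ((J x)ᵀ * P + P * J x)
      (-((2 * lam) • P) - eps • (1 : Matrix (Fin n) (Fin n) ℝ)))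
    (x y : ℝ → Fin n → ℝ)
    (hx : ∀ t : ℝ, 0 ≤ t → HasDerivAt x (f (x t)) t)
    (hy : ∀ t : ℝ, 0 ≤ t → HasDerivAt y (f (y t)) t) :
    ∀ t : ℝ, 0 ≤ t →
      Real.exp (2 * lam * t) * quadForm P (x t - y t)
        ≤ quadForm P (x 0 - y 0)
          - eps * ∫ τ in (0:ℝ)..t, Real.exp (2 * lam * τ) * ((x τ - y τ) ⬝ᵥ (x τ - y τ)) := by
  intro t ht
  have hxy : ∀ s, 0 ≤ s → HasDerivAt (fun s => x s - y s) (f (x s) - f (y s)) s :=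
    fun s hs => (hx s hs).sub (hy s hs)
  have hdiss : ∀ a b, 2 * ((a - b) ⬝ᵥ P *ᵥ (f a - f b))
      ≤ -(2 * lam) * quadForm P (a - b) - eps * ((a - b) ⬝ᵥ (a - b)) := by
    intro a b
    convert two_mul_dotProduct_mulVec_sub_le hJ
      (fun w => (hLMI w).two_mul_dotProduct_mulVec_le hPsymm) a b using 1
    simp [quadForm, sub_mulVec, neg_mulVec, smul_mulVec, dotProduct_sub]
  have hw : ContinuousOn (fun s => eps * ((x s - y s) ⬝ᵥ (x s - y s))) (Ici 0) := fun s hs =>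
    (((hxy s hs).dotProduct (hxy s hs)).continuousAt.const_mul eps).continuousWithinAt
  have := exp_mul_le_sub_integral_of_hasDerivAt_le (fun s hs => (hxy s hs).quadForm hPsymm) hw
    (fun s _ => hdiss (x s) (y s)) ht
  simpa only [mul_left_comm _ eps, intervalIntegral.integral_const_mul] using this

/-- integral dissipation estimate for the difference of two solutions. -/
theorem incremental_integral_estimate {n : ℕ}
    (f : (Fin n → ℝ) → (Fin n → ℝ)) (J : (Fin n → ℝ) → Matrix (Fin n) (Fin n) ℝ)
    (hf : ContDiff ℝ 1 f) (hJ : IsJacobianOf J f)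
    (P : Matrix (Fin n) (Fin n) ℝ) (hPsymm : P.IsSymm)
    (lam eps : ℝ) (hlam : 0 ≤ lam) (heps : 0 ≤ eps)
    (hLMI : ∀ x : Fin n → ℝ, matLE ((J x)ᵀ * P + P * J x)
      (-((2 * lam) • P) - eps • (1 : Matrix (Fin n) (Fin n) ℝ)))
    (x y : ℝ → Fin n → ℝ)
    (hx : ∀ t : ℝ, 0 ≤ t → HasDerivAt x (f (x t)) t)
    (hy : ∀ t : ℝ, 0 ≤ t → HasDerivAt y (f (y t)) t) :
    ∀ t : ℝ, 0 ≤ t →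
      Real.exp (2 * lam * t) * quadForm P (x t - y t)
        ≤ quadForm P (x 0 - y 0)
          - eps * ∫ τ in (0:ℝ)..t, Real.exp (2 * lam * τ) * ((x τ - y τ) ⬝ᵥ (x τ - y τ)) :=
  incremental_integral_estimate_general f J hJ P hPsymm lam eps hLMI x y hx hy
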